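/- Let T_m denote the number of game walks of length m. Then T_m = o(5^{m/2}) as m → ∞; that is, the quotient T_m / 5^{m/2} tends to 0 as m tends to infinity (in particular, T_{2M}/5^M → 0 as M → ∞). -/

import Mathlib

/-!
Every step of a game walk of length `m` lies in `stepSet m = {1} ∪ [-m, -3]`: the other steps are
at most `1` and the total is `1`. Weighting a step `d` by `x ^ d` with `x > 0`, each step sequence
of total `1` has weight `x`, while all `m`-step sequences together weigh
`(∑_{d ∈ stepSet m} x ^ d) ^ m`. Hence `T m ≤ (∑_{d ∈ stepSet m} x ^ d) ^ m / x`, and for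
`x = 9/5` the geometric tail gives `∑_{d ∈ stepSet m} x ^ d ≤ 9/5 + (5/9)^3 / (1 - 5/9) < √5`.
-/

open Finset Filter Topology

/-- A game walk: a finite sequence of integers each equal to `1` or at most
`-3`, all of whose partial sums are at least `1`, and whose total sum is `1`. -/
def IsGameWalk (D : List ℤ) : Prop :=
  (∀ d ∈ D, d = 1 ∨ d ≤ -3) ∧
  (∀ k, 1 ≤ k → k ≤ D.length → 1 ≤ (D.take k).sum) ∧
  D.sum = 1

/-- `T m` is the number of game walks of length `m`. -/
noncomputable def T (m : ℕ) : ℕ :=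
  Nat.card {D : List ℤ // D.length = m ∧ IsGameWalk D}

theorem Finset.prod_zpow_eq_zpow_sum₀ {ι G₀ : Type*} [CommGroupWithZero G₀] (s : Finset ι)
    (f : ι → ℤ) {a : G₀} (ha : a ≠ 0) : ∏ i ∈ s, a ^ f i = a ^ ∑ i ∈ s, f i := by
  induction s using Finset.cons_induction with
  | empty => simp
  | cons i s hi ih => rw [prod_cons, sum_cons, zpow_add₀ ha, ih]

theorem card_piFinset_filter_sum_eq_le {ι : Type*} [Fintype ι] [DecidableEq ι] (S : Finset ℤ)
    (s : ℤ) {x : ℝ} (hx : 0 < x) :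
    (#{f ∈ Fintype.piFinset fun _ : ι => S | ∑ i, f i = s} : ℝ) ≤
      (∑ d ∈ S, x ^ d) ^ Fintype.card ι / x ^ s := by
  rw [le_div_iff₀ (zpow_pos hx s)]
  calc (#{f ∈ Fintype.piFinset fun _ : ι => S | ∑ i, f i = s} : ℝ) * x ^ s
      = ∑ f ∈ Fintype.piFinset fun _ : ι => S with ∑ i, f i = s, x ^ ∑ i, f i := by
        rw [card_eq_sum_ones, Nat.cast_sum, sum_mul]
        exact sum_congr rfl fun f hf => by simp [(mem_filter.mp hf).2]
    _ ≤ ∑ f ∈ Fintype.piFinset fun _ : ι => S, x ^ ∑ i, f i :=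
        sum_le_sum_of_subset_of_nonneg (filter_subset _ _) fun _ _ _ => (zpow_pos hx _).le
    _ = (∑ d ∈ S, x ^ d) ^ Fintype.card ι := by
        simp_rw [← prod_zpow_eq_zpow_sum₀ _ _ hx.ne', ← prod_univ_sum, prod_const, card_univ]

theorem List.sum_le_add_length_sub_one_mul_of_mem {l : List ℤ} {b : ℤ} (hl : ∀ x ∈ l, x ≤ b)
    {a : ℤ} (ha : a ∈ l) : l.sum ≤ a + (l.length - 1) * b := by
  classical
  have hrest := (l.erase a).sum_le_card_nsmul b fun x hx => hl x (List.mem_of_mem_erase hx)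
  rw [List.length_erase_of_mem ha, nsmul_eq_mul, Nat.cast_pred (List.length_pos_of_mem ha)]
    at hrest
  rw [← List.sum_erase ha]
  linarith

noncomputable def stepSet (m : ℕ) : Finset ℤ :=
  insert 1 (Icc (-(m : ℤ)) (-3))

theorem IsGameWalk.mem_stepSet {D : List ℤ} (hD : IsGameWalk D) {d : ℤ} (hd : d ∈ D) :
    d ∈ stepSet D.length := by
  have hsum := D.sum_le_add_length_sub_one_mul_of_mem (b := 1)
    (fun x hx => by rcases hD.1 x hx with h | h <;> omega) hd
  rw [hD.2.2] at hsum
  rcases hD.1 d hd with h | h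
  · simp [stepSet, h]
  · simp only [stepSet, mem_insert, mem_Icc]
    omega

theorem T_le_card (m : ℕ) :
    T m ≤ #{f ∈ Fintype.piFinset fun _ : Fin m => stepSet m | ∑ i, f i = 1} := by
  set F := {f ∈ Fintype.piFinset fun _ : Fin m => stepSet m | ∑ i, f i = 1}
  have hsub : {D : List ℤ | D.length = m ∧ IsGameWalk D} ⊆ F.image List.ofFn := by
    rintro D ⟨rfl, hD⟩
    refine mem_image.2
      ⟨fun i : Fin D.length => D[(i : ℕ)], mem_filter.2 ⟨?_, ?_⟩, List.ofFn_getElem⟩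
    · exact Fintype.mem_piFinset.2 fun i => hD.mem_stepSet (List.getElem_mem _)
    · rw [← List.sum_ofFn, List.ofFn_getElem, hD.2.2]
  calc T m = Set.ncard {D : List ℤ | D.length = m ∧ IsGameWalk D} := Nat.card_coe_set_eq _
    _ ≤ (F.image List.ofFn : Set (List ℤ)).ncard := Set.ncard_le_ncard hsub (finite_toSet _)
    _ = #(F.image List.ofFn) := Set.ncard_coe_finset _
    _ ≤ #F := card_image_le

theorem T_le_sum_stepSet_zpow_pow (m : ℕ) {x : ℝ} (hx : 0 < x) :
    (T m : ℝ) ≤ (∑ d ∈ stepSet m, x ^ d) ^ m / x := by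
  have := card_piFinset_filter_sum_eq_le (ι := Fin m) (stepSet m) 1 hx
  rw [Fintype.card_fin, zpow_one] at this
  exact (Nat.cast_le.2 (T_le_card m)).trans this

theorem sum_Icc_neg_zpow_le {x : ℝ} (hx : 1 < x) (k n : ℕ) :
    ∑ d ∈ Icc (-(n : ℤ)) (-k), x ^ d ≤ x⁻¹ ^ k / (1 - x⁻¹) := by
  have hsum : ∑ d ∈ Icc (-(n : ℤ)) (-k), x ^ d = ∑ j ∈ Ico k (n + 1), x⁻¹ ^ j := by
    refine sum_nbij' (fun d => d.natAbs) (fun j => -(j : ℤ)) ?_ ?_ ?_ ?_ ?_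
    · intro d hd
      simp only [mem_Icc, mem_Ico] at hd ⊢
      omega
    · intro j hj
      simp only [mem_Icc, mem_Ico] at hj ⊢
      omega
    · intro d hd
      simp only [mem_Icc] at hd
      omega
    · intro j _
      simp
    · intro d hd
      simp only [mem_Icc] at hd
      rw [inv_pow, ← zpow_natCast, ← zpow_neg]
      congr 1
      omega
  rw [hsum]
  exact geom_sum_Ico_le_of_lt_one (by positivity) (inv_lt_one_of_one_lt₀ hx)

theorem sum_stepSet_zpow_le {x : ℝ} (hx : 1 < x) (m : ℕ) :
    ∑ d ∈ stepSet m, x ^ d ≤ x + x⁻¹ ^ 3 / (1 - x⁻¹) := by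
  rw [stepSet, sum_insert (by simp), zpow_one]
  gcongr
  exact_mod_cast sum_Icc_neg_zpow_le hx 3 m

theorem tendsto_div_rpow_half_atTop_zero {a : ℕ → ℝ} {b c C : ℝ} (ha : ∀ m, 0 ≤ a m)
    (hac : ∀ m, a m ≤ C * c ^ m) (hc : 0 ≤ c) (hcb : c ^ 2 < b) :
    Tendsto (fun m : ℕ => a m / b ^ ((m : ℝ) / 2)) atTop (𝓝 0) := by
  have hb : 0 < b := hcb.trans_le' (by positivity)
  have hcb' : c < √b := Real.lt_sqrt hc |>.2 hcb
  have hsb : 0 < √b := Real.sqrt_pos.2 hb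
  have hlim := (tendsto_pow_atTop_nhds_zero_of_lt_one (div_nonneg hc hsb.le)
    ((div_lt_one hsb).2 hcb')).const_mul C
  rw [mul_zero] at hlim
  refine squeeze_zero (fun m => div_nonneg (ha m) (by positivity)) (fun m => ?_) hlim
  rw [Real.rpow_div_two_eq_sqrt _ hb.le, Real.rpow_natCast, div_pow, ← mul_div_assoc]
  gcongr
  exact hac m

theorem gameWalk_count_little_o :
    Filter.Tendsto (fun m : ℕ => (T m : ℝ) / (5 : ℝ) ^ ((m : ℝ) / 2))
      Filter.atTop (nhds 0) := by
  have hx : (1 : ℝ) < 9 / 5 := by norm_num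
  refine tendsto_div_rpow_half_atTop_zero (fun m => Nat.cast_nonneg _) (C := (9 / 5 : ℝ)⁻¹)
    (c := 9 / 5 + (9 / 5 : ℝ)⁻¹ ^ 3 / (1 - (9 / 5)⁻¹)) (fun m => ?_) (by positivity) (by norm_num)
  calc (T m : ℝ) ≤ (∑ d ∈ stepSet m, (9 / 5 : ℝ) ^ d) ^ m / (9 / 5) :=
        T_le_sum_stepSet_zpow_pow m (by positivity)
    _ ≤ _ := by
        rw [div_eq_inv_mul]
        gcongr
        exact sum_stepSet_zpow_le hx m
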